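/- Superadditivity of ‖·‖_{p-TV}^p over intervals fails: for f : [−1,1] → ℝ given by f(t) = 1 for t ∈ (−1,1), f(−1) = 0, f(1) = −1, one has TV(f,[−1,0],δ) = (1−δ)₊, TV(f,[0,1],δ) = (2−δ)₊, TV(f,[−1,1],δ) = (1−δ)₊ + (2−δ)₊, and consequently ‖f‖_{2-TV,[−1,1]}² = 9/8 < ‖f‖_{2-TV,[−1,0]}² + ‖f‖_{2-TV,[0,1]}² = 1/4 + 1. -/

import Mathlib

open Set Filter Topology ENNReal

noncomputable def truncVar {E : Type*} [PseudoMetricSpace E] (f : ℝ → E) (a b δ : ℝ) : ℝ≥0∞ :=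
  ⨆ (n : ℕ) (t : Fin (n + 1) → ℝ) (_ : StrictMono t) (_ : ∀ i, t i ∈ Set.Icc a b),
    ENNReal.ofReal (∑ i : Fin n, max (dist (f (t i.succ)) (f (t i.castSucc)) - δ) 0)

def Regulated {E : Type*} [PseudoMetricSpace E] (f : ℝ → E) (a b : ℝ) : Prop :=
  (∀ t ∈ Set.Ico a b, ∃ L, Filter.Tendsto f (nhdsWithin t (Set.Ioi t)) (nhds L)) ∧
  (∀ t ∈ Set.Ioc a b, ∃ L, Filter.Tendsto f (nhdsWithin t (Set.Iio t)) (nhds L))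

noncomputable def badFun : ℝ → ℝ := fun t => if -1 < t ∧ t < 1 then 1 else if t = 1 then -1 else 0

/-!
On each of the three intervals `badFun` is constant in the interior, so in any partition only
the first step (leaving the left endpoint) and the last step (reaching the right endpoint) carry a
truncated jump, and the partition `a < (a + b) / 2 < b` realises both. The resulting functions
`δ (1 - δ)₊`, `δ (2 - δ)₊` and `δ ((1 - δ)₊ + (2 - δ)₊)` peak at the different points `1/2`, `1`
and `3/4`, which is why the supremum over `[-1, 1]` is strictly smaller than the sum of the other
two.
-/

lemma Finset.sum_ite_apply_eq_le_of_injective {ι α : Type*} [Fintype ι] [DecidableEq α]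
    {g : ι → α} (hg : Function.Injective g) (x : α) {c : ℝ} (hc : 0 ≤ c) :
    ∑ i, (if g i = x then c else 0) ≤ c := by
  calc ∑ i, (if g i = x then c else 0)
      = ∑ y ∈ Finset.univ.map ⟨g, hg⟩, (if y = x then c else 0) := by
        rw [Finset.sum_map]; rfl
    _ = if x ∈ Finset.univ.map ⟨g, hg⟩ then c else 0 := Finset.sum_ite_eq' _ _ _
    _ ≤ c := by split_ifs <;> simp [hc]

section truncVar

variable {E : Type*} [PseudoMetricSpace E] {f : ℝ → E} {a b δ : ℝ}

lemma truncVar_le_ofReal {C : ℝ}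
    (h : ∀ (n : ℕ) (t : Fin (n + 1) → ℝ), StrictMono t → (∀ i, t i ∈ Icc a b) →
      ∑ i : Fin n, max (dist (f (t i.succ)) (f (t i.castSucc)) - δ) 0 ≤ C) :
    truncVar f a b δ ≤ ENNReal.ofReal C :=
  iSup₂_le fun n t => iSup₂_le fun ht hmem => ENNReal.ofReal_le_ofReal (h n t ht hmem)

lemma ofReal_sum_le_truncVar {n : ℕ} {t : Fin (n + 1) → ℝ} (ht : StrictMono t)
    (hmem : ∀ i, t i ∈ Icc a b) :
    ENNReal.ofReal (∑ i : Fin n, max (dist (f (t i.succ)) (f (t i.castSucc)) - δ) 0)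
      ≤ truncVar f a b δ :=
  le_iSup₂_of_le n t <| le_iSup₂_of_le (f := fun _ _ => _) ht hmem le_rfl

variable {c : E}

lemma max_dist_sub_le_of_forall_Ioo_eq (hδ : 0 ≤ δ) (hf : ∀ x ∈ Ioo a b, f x = c)
    (hend : dist (f b) (f a) ≤ max (dist (f a) c) (dist (f b) c))
    {s u : ℝ} (hsu : s < u) (hs : s ∈ Icc a b) (hu : u ∈ Icc a b) :
    max (dist (f u) (f s) - δ) 0 ≤
      (if s = a then max (dist (f a) c - δ) 0 else 0) +
        (if u = b then max (dist (f b) c - δ) 0 else 0) := by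
  have hfu (hub : u ≠ b) : f u = c := hf u ⟨hs.1.trans_lt hsu, hu.2.lt_of_ne hub⟩
  have hfs (hsa : s ≠ a) : f s = c := hf s ⟨hs.1.lt_of_ne' hsa, hsu.trans_le hu.2⟩
  by_cases hsa : s = a <;> by_cases hub : u = b <;> simp only [hsa, hub, if_true, if_false]
  · rcases le_max_iff.mp hend with h | h
    · exact max_le (by linarith [le_max_left (dist (f a) c - δ) 0, le_max_right (dist (f b) c - δ) 0])
        (by positivity)
    · exact max_le (by linarith [le_max_right (dist (f a) c - δ) 0, le_max_left (dist (f b) c - δ) 0])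
        (by positivity)
  · rw [hfu hub, dist_comm, add_zero]
  · rw [hfs hsa, zero_add]
  · rw [hfu hub, hfs hsa, dist_self, add_zero, max_eq_right (by linarith)]

/-- Without `hend` the two-point partition `a < b` could beat the midpoint partition. -/
theorem truncVar_eq_of_forall_Ioo_eq (hab : a < b) (hδ : 0 ≤ δ) (hf : ∀ x ∈ Ioo a b, f x = c)
    (hend : dist (f b) (f a) ≤ max (dist (f a) c) (dist (f b) c)) :
    truncVar f a b δ =
      ENNReal.ofReal (max (dist (f a) c - δ) 0 + max (dist (f b) c - δ) 0) := by
  apply le_antisymm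
  · refine truncVar_le_ofReal fun n t ht hmem => ?_
    calc ∑ i : Fin n, max (dist (f (t i.succ)) (f (t i.castSucc)) - δ) 0
        ≤ ∑ i : Fin n, ((if t i.castSucc = a then max (dist (f a) c - δ) 0 else 0) +
            (if t i.succ = b then max (dist (f b) c - δ) 0 else 0)) :=
          Finset.sum_le_sum fun i _ => max_dist_sub_le_of_forall_Ioo_eq hδ hf hend
            (ht i.castSucc_lt_succ) (hmem _) (hmem _)
      _ ≤ _ := by
          rw [Finset.sum_add_distrib]
          exact add_le_add
            (Finset.sum_ite_apply_eq_le_of_injective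
              (ht.injective.comp (Fin.castSucc_injective n)) a (le_max_right _ _))
            (Finset.sum_ite_apply_eq_le_of_injective
              (ht.injective.comp (Fin.succ_injective n)) b (le_max_right _ _))
  · have hmid : f ((a + b) / 2) = c := hf _ ⟨by linarith, by linarith⟩
    have ht : StrictMono ![a, (a + b) / 2, b] :=
      Fin.strictMono_iff_lt_succ.mpr fun i => by fin_cases i <;> simp <;> linarith
    have hmem : ∀ i, ![a, (a + b) / 2, b] i ∈ Icc a b := fun i => by
      fin_cases i <;> simp [hab.le]; constructor <;> linarith
    refine (le_of_eq ?_).trans (ofReal_sum_le_truncVar ht hmem)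
    congr 1
    simp [Fin.sum_univ_two, hmid, dist_comm]

end truncVar

lemma badFun_of_mem_Ioo {x : ℝ} (hx : x ∈ Ioo (-1) 1) : badFun x = 1 := if_pos hx

lemma truncVar_badFun_neg_one_zero {δ : ℝ} (hδ : 0 ≤ δ) :
    truncVar badFun (-1) 0 δ = ENNReal.ofReal (max (1 - δ) 0) := by
  rw [truncVar_eq_of_forall_Ioo_eq (c := 1) (by norm_num) hδ
    (fun x hx => badFun_of_mem_Ioo ⟨hx.1, by linarith [hx.2]⟩) (by norm_num [badFun])]
  norm_num [badFun, hδ]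

lemma truncVar_badFun_zero_one {δ : ℝ} (hδ : 0 ≤ δ) :
    truncVar badFun 0 1 δ = ENNReal.ofReal (max (2 - δ) 0) := by
  rw [truncVar_eq_of_forall_Ioo_eq (c := 1) (by norm_num) hδ
    (fun x hx => badFun_of_mem_Ioo ⟨by linarith [hx.1], hx.2⟩) (by norm_num [badFun, Real.dist_eq])]
  norm_num [badFun, hδ, Real.dist_eq]

lemma truncVar_badFun_neg_one_one {δ : ℝ} (hδ : 0 ≤ δ) :
    truncVar badFun (-1) 1 δ = ENNReal.ofReal (max (1 - δ) 0 + max (2 - δ) 0) := by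
  rw [truncVar_eq_of_forall_Ioo_eq (c := 1) (by norm_num) hδ
    (fun x hx => badFun_of_mem_Ioo hx) (by norm_num [badFun, Real.dist_eq])]
  norm_num [badFun, Real.dist_eq]

lemma iSup_pos_ofReal_mul_eq_of_isGreatest {F : ℝ → ℝ≥0∞} {g : ℝ → ℝ} {M : ℝ}
    (hF : ∀ δ, 0 < δ → F δ = ENNReal.ofReal (g δ))
    (hM : IsGreatest ((fun δ => δ * g δ) '' Ioi 0) M) :
    ⨆ (δ : ℝ) (_ : 0 < δ), ENNReal.ofReal δ * F δ = ENNReal.ofReal M := by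
  obtain ⟨⟨δ₀, hδ₀, rfl⟩, hle⟩ := hM
  have hmul (δ : ℝ) (hδ : 0 < δ) : ENNReal.ofReal δ * F δ = ENNReal.ofReal (δ * g δ) := by
    rw [hF δ hδ, ENNReal.ofReal_mul hδ.le]
  apply le_antisymm
  · exact iSup₂_le fun δ hδ => (hmul δ hδ).le.trans (ENNReal.ofReal_le_ofReal (hle ⟨δ, hδ, rfl⟩))
  · exact le_iSup₂_of_le δ₀ hδ₀ (hmul δ₀ hδ₀).ge

lemma mul_max_sub_le (a δ : ℝ) : δ * max (a - δ) 0 ≤ a ^ 2 / 4 := by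
  rcases le_total δ a with h | h
  · rw [max_eq_left (by linarith)]
    nlinarith [sq_nonneg (a - 2 * δ)]
  · rw [max_eq_right (by linarith), mul_zero]
    positivity

lemma isGreatest_mul_max_sub {a : ℝ} (ha : 0 < a) :
    IsGreatest ((fun δ => δ * max (a - δ) 0) '' Ioi 0) (a ^ 2 / 4) :=
  ⟨⟨a / 2, half_pos ha, by
    simp only [max_eq_left (by linarith : 0 ≤ a - a / 2)]; ring⟩,
    by rintro _ ⟨δ, -, rfl⟩; exact mul_max_sub_le a δ⟩

lemma isGreatest_mul_max_one_sub_add_max_two_sub :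
    IsGreatest ((fun δ : ℝ => δ * (max (1 - δ) 0 + max (2 - δ) 0)) '' Ioi 0) (9 / 8) := by
  refine ⟨⟨3 / 4, by norm_num, by norm_num⟩, ?_⟩
  rintro _ ⟨δ, -, rfl⟩
  dsimp only
  rcases le_total δ 1 with h | h
  · rw [max_eq_left (by linarith), max_eq_left (by linarith)]
    nlinarith [sq_nonneg (δ - 3 / 4)]
  · rw [max_eq_right (by linarith), zero_add]
    linarith [mul_max_sub_le 2 δ]

theorem stmt_18 :
    (∀ δ : ℝ, 0 ≤ δ → truncVar badFun (-1) 0 δ = ENNReal.ofReal (max (1 - δ) 0)) ∧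
    (∀ δ : ℝ, 0 ≤ δ → truncVar badFun 0 1 δ = ENNReal.ofReal (max (2 - δ) 0)) ∧
    (∀ δ : ℝ, 0 ≤ δ →
      truncVar badFun (-1) 1 δ = ENNReal.ofReal (max (1 - δ) 0 + max (2 - δ) 0)) ∧
    (⨆ (δ : ℝ) (_ : 0 < δ), ENNReal.ofReal δ * truncVar badFun (-1) 1 δ)
        = ENNReal.ofReal (9 / 8) ∧
    (⨆ (δ : ℝ) (_ : 0 < δ), ENNReal.ofReal δ * truncVar badFun (-1) 0 δ)
        = ENNReal.ofReal (1 / 4) ∧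
    (⨆ (δ : ℝ) (_ : 0 < δ), ENNReal.ofReal δ * truncVar badFun 0 1 δ) = 1 ∧
    (ENNReal.ofReal (9 / 8) < ENNReal.ofReal (1 / 4) + 1) := by
  refine ⟨fun _ => truncVar_badFun_neg_one_zero, fun _ => truncVar_badFun_zero_one,
    fun _ => truncVar_badFun_neg_one_one, ?_, ?_, ?_, ?_⟩
  · exact iSup_pos_ofReal_mul_eq_of_isGreatest (fun _ hδ => truncVar_badFun_neg_one_one hδ.le)
      isGreatest_mul_max_one_sub_add_max_two_sub
  · convert iSup_pos_ofReal_mul_eq_of_isGreatest (fun _ hδ => truncVar_badFun_neg_one_zero hδ.le)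
      (isGreatest_mul_max_sub one_pos) using 2
    norm_num
  · convert iSup_pos_ofReal_mul_eq_of_isGreatest (fun _ hδ => truncVar_badFun_zero_one hδ.le)
      (isGreatest_mul_max_sub two_pos)
    norm_num
  · rw [← ENNReal.ofReal_one, ← ENNReal.ofReal_add (by norm_num) (by norm_num),
      ENNReal.ofReal_lt_ofReal_iff (by norm_num)]
    norm_num
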